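/- arXiv:1808.04515 — 2 statements merged into one kernel-verified Lean document; each statement's English description precedes it below -/
import Mathlib

section
/- For every L ∈ ℝ^{n×k} and R ∈ ℝ^{m×k}, the nuclear norm of the product satisfies ‖L Rᵀ‖_* ≤ (1/2)(‖L‖_F² + ‖R‖_F²). -/
/-!
Let `A = L Rᵀ`, let `(v j)` be an orthonormal eigenbasis of `AᵀA`, and put `u j = A v j / ‖A v j‖`
(which is `0` when `A v j = 0`). The vectors `A v j` are pairwise orthogonal with
`‖A v j‖ = σ j`, so by AM-GM
`‖A‖_* = ∑ ⟪u j, A v j⟫ = ∑ ⟪Lᵀ u j, Rᵀ v j⟫ ≤ ½ ∑ (‖Lᵀ u j‖² + ‖Rᵀ v j‖²)`.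
The nonzero `u j` are orthonormal, so Bessel's inequality applied to the rows of `Lᵀ` bounds the
first sum by `‖L‖_F²`, while Parseval's identity turns the second into `‖R‖_F²`.
-/

open Matrix
/-- Frobenius norm of a real matrix. -/
noncomputable def frobNorm {n m : ℕ} (X : Matrix (Fin n) (Fin m) ℝ) : ℝ :=
  Real.sqrt (∑ i, ∑ j, (X i j) ^ 2)

/-- Nuclear norm of a real matrix: the sum of its singular values, i.e. the square
roots of the eigenvalues of the positive semidefinite matrix `Xᵀ X` (over `ℝ`,
`Xᴴ = Xᵀ`). -/
noncomputable def nucNorm {n m : ℕ} (X : Matrix (Fin n) (Fin m) ℝ) : ℝ :=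
  ∑ j, Real.sqrt ((show (Xᵀ * X).IsHermitian by
    simpa using Matrix.isHermitian_conjTranspose_mul_self X).eigenvalues j)

open scoped RealInnerProductSpace

section Bessel

variable {ι E : Type*} [NormedAddCommGroup E] [InnerProductSpace ℝ E]

theorem orthonormal_inv_norm_smul_of_pairwise_inner_eq_zero {w : ι → E}
    (hw : Pairwise fun i j => ⟪w i, w j⟫ = 0) :
    Orthonormal ℝ fun i : {i // w i ≠ 0} => ‖w i‖⁻¹ • w i := by
  refine ⟨fun i => norm_smul_inv_norm (𝕜 := ℝ) i.2, fun i j hij => ?_⟩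
  simp only [real_inner_smul_left, real_inner_smul_right, hw (Subtype.coe_injective.ne hij),
    mul_zero]

theorem sum_inner_inv_norm_smul_sq_le [Fintype ι] {w : ι → E}
    (hw : Pairwise fun i j => ⟪w i, w j⟫ = 0) (x : E) : ∑ i, ⟪‖w i‖⁻¹ • w i, x⟫ ^ 2 ≤ ‖x‖ ^ 2 := by
  classical
  calc ∑ i, ⟪‖w i‖⁻¹ • w i, x⟫ ^ 2
      = ∑ i ∈ Finset.univ.filter (w · ≠ 0), ⟪‖w i‖⁻¹ • w i, x⟫ ^ 2 := by
        refine (Finset.sum_filter_of_ne fun i _ h => ?_).symm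
        contrapose! h
        simp [h]
    _ = ∑ i : {i // w i ≠ 0}, ⟪‖w i‖⁻¹ • w i, x⟫ ^ 2 := Finset.sum_subtype _ (by simp) _
    _ = ∑ i : {i // w i ≠ 0}, ‖⟪‖w i‖⁻¹ • w i, x⟫‖ ^ 2 := by simp only [Real.norm_eq_abs, sq_abs]
    _ ≤ ‖x‖ ^ 2 := (orthonormal_inv_norm_smul_of_pairwise_inner_eq_zero hw).sum_inner_products_le x

theorem real_inner_inv_norm_smul_self (x : E) : ⟪‖x‖⁻¹ • x, x⟫ = ‖x‖ := by
  rw [real_inner_smul_left, real_inner_self_eq_norm_sq]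
  rcases eq_or_ne ‖x‖ 0 with h | h
  · simp [h]
  · field_simp

end Bessel

section Matrix

variable {l m n : Type*} [Fintype l] [Fintype m] [Fintype n] [DecidableEq m] [DecidableEq n]

theorem inner_toEuclideanLin_right (M : Matrix m n ℝ) (x : EuclideanSpace ℝ m)
    (y : EuclideanSpace ℝ n) : ⟪x, M.toEuclideanLin y⟫ = ⟪Mᵀ.toEuclideanLin x, y⟫ := by
  rw [← conjTranspose_eq_transpose_of_trivial, toEuclideanLin_conjTranspose_eq_adjoint,
    LinearMap.adjoint_inner_left]

theorem norm_sq_toEuclideanLin (M : Matrix l n ℝ) (x : EuclideanSpace ℝ n) :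
    ‖M.toEuclideanLin x‖ ^ 2 = ∑ c, ⟪x, WithLp.toLp 2 (M c)⟫ ^ 2 := by
  simp [EuclideanSpace.norm_sq_eq, toLpLin_apply, mulVec, dotProduct, PiLp.inner_apply]

theorem inner_toEuclideanLin_toEuclideanLin (X : Matrix n m ℝ) (x y : EuclideanSpace ℝ m) :
    ⟪X.toEuclideanLin x, X.toEuclideanLin y⟫ = ⟪x, (Xᵀ * X).toEuclideanLin y⟫ := by
  rw [toLpLin_mul_same, LinearMap.comp_apply, inner_toEuclideanLin_right Xᵀ, transpose_transpose]

theorem inner_toEuclideanLin_eigenvectorBasis {X : Matrix n m ℝ} (hX : (Xᵀ * X).IsHermitian)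
    (x : EuclideanSpace ℝ m) (j : m) :
    ⟪X.toEuclideanLin x, X.toEuclideanLin (hX.eigenvectorBasis j)⟫ =
      hX.eigenvalues j * ⟪x, hX.eigenvectorBasis j⟫ := by
  rw [inner_toEuclideanLin_toEuclideanLin, toLpLin_apply, hX.mulVec_eigenvectorBasis,
    WithLp.toLp_smul, WithLp.toLp_ofLp, real_inner_smul_right]

theorem pairwise_inner_toEuclideanLin_eigenvectorBasis {X : Matrix n m ℝ}
    (hX : (Xᵀ * X).IsHermitian) :
    Pairwise fun i j =>
      ⟪X.toEuclideanLin (hX.eigenvectorBasis i), X.toEuclideanLin (hX.eigenvectorBasis j)⟫ = 0 :=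
  fun i j hij => by
    simp only [inner_toEuclideanLin_eigenvectorBasis, hX.eigenvectorBasis.orthonormal.2 hij,
      mul_zero]

theorem eigenvalues_eq_norm_sq_toEuclideanLin {X : Matrix n m ℝ} (hX : (Xᵀ * X).IsHermitian)
    (j : m) : hX.eigenvalues j = ‖X.toEuclideanLin (hX.eigenvectorBasis j)‖ ^ 2 := by
  rw [← real_inner_self_eq_norm_sq, inner_toEuclideanLin_eigenvectorBasis,
    real_inner_self_eq_norm_sq, hX.eigenvectorBasis.orthonormal.1, one_pow, mul_one]

theorem inner_mul_transpose_toEuclideanLin_le {k : Type*} [Fintype k] [DecidableEq k]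
    (L : Matrix n k ℝ) (R : Matrix m k ℝ) (u : EuclideanSpace ℝ n) (x : EuclideanSpace ℝ m) :
    ⟪u, (L * Rᵀ).toEuclideanLin x⟫ ≤
      (‖Lᵀ.toEuclideanLin u‖ ^ 2 + ‖Rᵀ.toEuclideanLin x‖ ^ 2) / 2 := by
  rw [toLpLin_mul_same, LinearMap.comp_apply, inner_toEuclideanLin_right]
  linarith [real_inner_le_norm (Lᵀ.toEuclideanLin u) (Rᵀ.toEuclideanLin x),
    two_mul_le_add_sq ‖Lᵀ.toEuclideanLin u‖ ‖Rᵀ.toEuclideanLin x‖]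

end Matrix

section FinMatrix

variable {k n m : ℕ}

theorem frobNorm_sq (X : Matrix (Fin n) (Fin m) ℝ) :
    frobNorm X ^ 2 = ∑ i, ‖WithLp.toLp 2 (X i)‖ ^ 2 := by
  rw [frobNorm, Real.sq_sqrt (by positivity)]
  simp [EuclideanSpace.norm_sq_eq]

theorem frobNorm_transpose (X : Matrix (Fin n) (Fin m) ℝ) : frobNorm Xᵀ = frobNorm X := by
  rw [frobNorm, frobNorm, Finset.sum_comm]
  rfl

theorem sum_norm_sq_toEuclideanLin {ι : Type*} [Fintype ι] (M : Matrix (Fin k) (Fin n) ℝ)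
    (u : ι → EuclideanSpace ℝ (Fin n)) :
    ∑ i, ‖M.toEuclideanLin (u i)‖ ^ 2 = ∑ c, ∑ i, ⟪u i, WithLp.toLp 2 (M c)⟫ ^ 2 := by
  simp_rw [norm_sq_toEuclideanLin]
  exact Finset.sum_comm

theorem sum_norm_sq_toEuclideanLin_le_frobNorm_sq {ι : Type*} [Fintype ι]
    (M : Matrix (Fin k) (Fin n) ℝ) {u : ι → EuclideanSpace ℝ (Fin n)}
    (hu : ∀ x, ∑ i, ⟪u i, x⟫ ^ 2 ≤ ‖x‖ ^ 2) :
    ∑ i, ‖M.toEuclideanLin (u i)‖ ^ 2 ≤ frobNorm M ^ 2 := by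
  rw [sum_norm_sq_toEuclideanLin, frobNorm_sq]
  exact Finset.sum_le_sum fun c _ => hu _

theorem sum_norm_sq_toEuclideanLin_orthonormalBasis {ι : Type*} [Fintype ι]
    (M : Matrix (Fin k) (Fin n) ℝ) (b : OrthonormalBasis ι ℝ (EuclideanSpace ℝ (Fin n))) :
    ∑ i, ‖M.toEuclideanLin (b i)‖ ^ 2 = frobNorm M ^ 2 := by
  simp_rw [sum_norm_sq_toEuclideanLin, frobNorm_sq, b.sum_sq_inner_right]

theorem nucNorm_eq_sum_norm_toEuclideanLin_eigenvectorBasis (X : Matrix (Fin n) (Fin m) ℝ)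
    (hX : (Xᵀ * X).IsHermitian) :
    nucNorm X = ∑ j, ‖X.toEuclideanLin (hX.eigenvectorBasis j)‖ := by
  simp_rw [nucNorm, eigenvalues_eq_norm_sq_toEuclideanLin hX, Real.sqrt_sq (norm_nonneg _)]

end FinMatrix

/-- For every `L ∈ ℝ^{n×k}` and `R ∈ ℝ^{m×k}`,
`‖L Rᵀ‖_* ≤ (1/2)(‖L‖_F² + ‖R‖_F²)`. -/
theorem nucNorm_mul_transpose_le (n m k : ℕ)
    (L : Matrix (Fin n) (Fin k) ℝ) (R : Matrix (Fin m) (Fin k) ℝ) :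
    nucNorm (L * Rᵀ) ≤ (1 / 2) * (frobNorm L ^ 2 + frobNorm R ^ 2) := by
  have hA : ((L * Rᵀ)ᵀ * (L * Rᵀ)).IsHermitian := by
    simpa using isHermitian_conjTranspose_mul_self (L * Rᵀ)
  set v := hA.eigenvectorBasis
  set w := fun j => (L * Rᵀ).toEuclideanLin (v j)
  set u := fun j => ‖w j‖⁻¹ • w j
  have hLu : ∑ j, ‖Lᵀ.toEuclideanLin (u j)‖ ^ 2 ≤ frobNorm L ^ 2 := by
    rw [← frobNorm_transpose]
    exact sum_norm_sq_toEuclideanLin_le_frobNorm_sq Lᵀ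
      (sum_inner_inv_norm_smul_sq_le (pairwise_inner_toEuclideanLin_eigenvectorBasis hA))
  have hRv : ∑ j, ‖Rᵀ.toEuclideanLin (v j)‖ ^ 2 = frobNorm R ^ 2 := by
    rw [← frobNorm_transpose, sum_norm_sq_toEuclideanLin_orthonormalBasis]
  calc nucNorm (L * Rᵀ) = ∑ j, ⟪u j, (L * Rᵀ).toEuclideanLin (v j)⟫ := by
        simp only [nucNorm_eq_sum_norm_toEuclideanLin_eigenvectorBasis _ hA, u, w, v,
          real_inner_inv_norm_smul_self]
    _ ≤ ∑ j, (‖Lᵀ.toEuclideanLin (u j)‖ ^ 2 + ‖Rᵀ.toEuclideanLin (v j)‖ ^ 2) / 2 :=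
        Finset.sum_le_sum fun j _ => inner_mul_transpose_toEuclideanLin_le L R _ _
    _ ≤ (1 / 2) * (frobNorm L ^ 2 + frobNorm R ^ 2) := by
        rw [← Finset.sum_div, Finset.sum_add_distrib]
        linarith
end

section
/- Let L ∈ ℝ^{p×N}, A ∈ ℝ^{q×N}, b ∈ ℝ^q, d ∈ ℝ^N, γ > 0, η > 0, and for λ ≥ 0 set w(λ) = M(λ)^{-1}((1/η)d + λAᵀb) with M(λ) = (1/γ)LᵀL + (1/η)I + λAᵀA. Then the data-misfit function λ ↦ ‖A w(λ) − b‖₂ is nonincreasing on [0,∞): for all 0 ≤ λ₁ ≤ λ₂ one has ‖A w(λ₂) − b‖₂ ≤ ‖A w(λ₁) − b‖₂. -/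
open Matrix

/-- Euclidean (l²) norm on `ℝ^q`. -/
noncomputable def l2 {q : ℕ} (v : Fin q → ℝ) : ℝ :=
  Real.sqrt (∑ i, (v i) ^ 2)

/-- `M(λ) = (1/γ) LᵀL + (1/η) I + λ AᵀA`. -/
noncomputable def Mmat {p q N : ℕ} (L : Matrix (Fin p) (Fin N) ℝ)
    (A : Matrix (Fin q) (Fin N) ℝ) (γ η lam : ℝ) : Matrix (Fin N) (Fin N) ℝ :=
  (1 / γ) • (Lᵀ * L) + (1 / η) • (1 : Matrix (Fin N) (Fin N) ℝ) + lam • (Aᵀ * A)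

/-!
`w(λ)` is the minimiser of the Tikhonov functional `R(v) + λ F(v)`, with
`R(v) = (1/γ)‖Lv‖² + (1/η)‖v - d‖²` and `F(v) = ‖Av - b‖²`: up to a constant this functional is
the convex quadratic `v ⬝ M(λ) v - 2 v ⬝ c(λ)` with `c(λ) = (1/η)d + λAᵀb`, whose critical point
is `M(λ)⁻¹ c(λ)`. Adding the minimality inequalities of `w(λ₁)` and `w(λ₂)`, each tested at the
other point, gives `(λ₂ - λ₁)(F(w(λ₂)) - F(w(λ₁))) ≤ 0`.
-/

theorem le_of_forall_add_mul_le {X : Type*} {Φ f : X → ℝ} {lam₁ lam₂ : ℝ} {w₁ w₂ : X}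
    (hlt : lam₁ < lam₂) (h₁ : ∀ v, Φ w₁ + lam₁ * f w₁ ≤ Φ v + lam₁ * f v)
    (h₂ : ∀ v, Φ w₂ + lam₂ * f w₂ ≤ Φ v + lam₂ * f v) :
    f w₂ ≤ f w₁ := by
  have h : (lam₂ - lam₁) * (f w₂ - f w₁) ≤ 0 := by linarith [h₁ w₂, h₂ w₁]
  exact sub_nonpos.mp (nonpos_of_mul_nonpos_right h (sub_pos.mpr hlt))

namespace Matrix

variable {n : Type*} [Fintype n] {M : Matrix n n ℝ}

theorem IsHermitian.dotProduct_mulVec_comm (hM : M.IsHermitian) (v w : n → ℝ) :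
    v ⬝ᵥ M *ᵥ w = w ⬝ᵥ M *ᵥ v := by
  rw [dotProduct_mulVec, ← mulVec_transpose, dotProduct_comm,
    ← conjTranspose_eq_transpose_of_trivial, hM.eq]

theorem PosSemidef.quadratic_le_of_mulVec_eq (hM : M.PosSemidef) {w c : n → ℝ}
    (hw : M *ᵥ w = c) (v : n → ℝ) :
    w ⬝ᵥ M *ᵥ w - 2 * (w ⬝ᵥ c) ≤ v ⬝ᵥ M *ᵥ v - 2 * (v ⬝ᵥ c) := by
  have hgap : v ⬝ᵥ M *ᵥ v - 2 * (v ⬝ᵥ c) - (w ⬝ᵥ M *ᵥ w - 2 * (w ⬝ᵥ c))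
      = (v - w) ⬝ᵥ M *ᵥ (v - w) := by
    rw [← hw]
    simp only [mulVec_sub, dotProduct_sub, sub_dotProduct]
    rw [hM.isHermitian.dotProduct_mulVec_comm w v]
    ring
  have hnonneg := hM.dotProduct_mulVec_nonneg (v - w)
  rw [star_trivial] at hnonneg
  linarith

end Matrix

section Tikhonov

variable {p q N : ℕ} (L : Matrix (Fin p) (Fin N) ℝ) (A : Matrix (Fin q) (Fin N) ℝ)
  (γ η lam : ℝ) (b : Fin q → ℝ) (d : Fin N → ℝ)

noncomputable def tikhonovSolution : Fin N → ℝ :=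
  (Mmat L A γ η lam)⁻¹ *ᵥ ((1 / η) • d + lam • Aᵀ *ᵥ b)

noncomputable def regularizer (v : Fin N → ℝ) : ℝ :=
  (1 / γ) * (L *ᵥ v ⬝ᵥ L *ᵥ v) + (1 / η) * ((v - d) ⬝ᵥ (v - d))

def sqMisfit (v : Fin N → ℝ) : ℝ :=
  (A *ᵥ v - b) ⬝ᵥ (A *ᵥ v - b)

theorem dotProduct_Mmat_mulVec (v w : Fin N → ℝ) :
    v ⬝ᵥ Mmat L A γ η lam *ᵥ w
      = (1 / γ) * (L *ᵥ v ⬝ᵥ L *ᵥ w) + (1 / η) * (v ⬝ᵥ w) + lam * (A *ᵥ v ⬝ᵥ A *ᵥ w) := by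
  simp only [Mmat, add_mulVec, smul_mulVec, ← mulVec_mulVec, one_mulVec, dotProduct_add,
    dotProduct_smul, dotProduct_mulVec _ Lᵀ, dotProduct_mulVec _ Aᵀ, vecMul_transpose,
    smul_eq_mul]

theorem regularizer_add_mul_sqMisfit (v : Fin N → ℝ) :
    regularizer L γ η d v + lam * sqMisfit A b v
      = v ⬝ᵥ Mmat L A γ η lam *ᵥ v - 2 * (v ⬝ᵥ ((1 / η) • d + lam • Aᵀ *ᵥ b))
        + ((1 / η) * (d ⬝ᵥ d) + lam * (b ⬝ᵥ b)) := by
  simp only [regularizer, sqMisfit, dotProduct_Mmat_mulVec, dotProduct_add, dotProduct_smul,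
    dotProduct_mulVec v Aᵀ, vecMul_transpose, dotProduct_sub, sub_dotProduct, smul_eq_mul]
  rw [dotProduct_comm d v, dotProduct_comm b (A *ᵥ v)]
  ring

variable {γ η lam}

theorem Mmat_posDef (hγ : 0 ≤ γ) (hη : 0 < η) (hlam : 0 ≤ lam) : (Mmat L A γ η lam).PosDef := by
  have hLL : ((1 / γ) • (Lᵀ * L)).PosSemidef :=
    (posSemidef_conjTranspose_mul_self L).smul (one_div_nonneg.mpr hγ)
  have hAA : (lam • (Aᵀ * A)).PosSemidef := (posSemidef_conjTranspose_mul_self A).smul hlam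
  exact (PosDef.posSemidef_add hLL (PosDef.one.smul (one_div_pos.mpr hη))).add_posSemidef hAA

theorem tikhonovSolution_le (hγ : 0 ≤ γ) (hη : 0 < η) (hlam : 0 ≤ lam) (v : Fin N → ℝ) :
    regularizer L γ η d (tikhonovSolution L A γ η lam b d)
        + lam * sqMisfit A b (tikhonovSolution L A γ η lam b d)
      ≤ regularizer L γ η d v + lam * sqMisfit A b v := by
  have hM := Mmat_posDef L A hγ hη hlam
  have hsol : Mmat L A γ η lam *ᵥ tikhonovSolution L A γ η lam b d
      = (1 / η) • d + lam • Aᵀ *ᵥ b := by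
    rw [tikhonovSolution, mulVec_mulVec, mul_nonsing_inv _ ((isUnit_iff_isUnit_det _).mp hM.isUnit),
      one_mulVec]
  rw [regularizer_add_mul_sqMisfit, regularizer_add_mul_sqMisfit]
  linarith [hM.posSemidef.quadratic_le_of_mulVec_eq hsol v]

end Tikhonov

theorem l2_eq_sqrt_dotProduct {q : ℕ} (v : Fin q → ℝ) : l2 v = √(v ⬝ᵥ v) := by
  simp [l2, dotProduct, sq]

/-- The data-misfit `λ ↦ ‖A w(λ) − b‖₂` is nonincreasing on `[0, ∞)`, where
`w(λ) = M(λ)⁻¹((1/η)d + λAᵀb)`. -/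
theorem misfit_antitone (p q N : ℕ)
    (L : Matrix (Fin p) (Fin N) ℝ) (A : Matrix (Fin q) (Fin N) ℝ)
    (b : Fin q → ℝ) (d : Fin N → ℝ) (γ η : ℝ) (hγ : 0 < γ) (hη : 0 < η) :
    ∀ lam₁ lam₂ : ℝ, 0 ≤ lam₁ → lam₁ ≤ lam₂ →
      l2 (A.mulVec ((Mmat L A γ η lam₂)⁻¹.mulVec ((1 / η) • d + lam₂ • Aᵀ.mulVec b)) - b) ≤
        l2 (A.mulVec ((Mmat L A γ η lam₁)⁻¹.mulVec ((1 / η) • d + lam₁ • Aᵀ.mulVec b)) - b) := by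
  intro lam₁ lam₂ h₁ h₁₂
  rcases h₁₂.eq_or_lt with rfl | hlt
  · exact le_rfl
  have hmisfit : sqMisfit A b (tikhonovSolution L A γ η lam₂ b d)
      ≤ sqMisfit A b (tikhonovSolution L A γ η lam₁ b d) :=
    le_of_forall_add_mul_le hlt (tikhonovSolution_le L A b d hγ.le hη h₁)
      (tikhonovSolution_le L A b d hγ.le hη (h₁.trans h₁₂))
  rw [l2_eq_sqrt_dotProduct, l2_eq_sqrt_dotProduct]
  exact Real.sqrt_le_sqrt hmisfit
end
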